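/- Let L ⊴ G, φ ∈ Irr(L) invariant in G, and let ⟨·,·⟩_φ be the scalar form defined on pairs x, y ∈ G with [x,y] ∈ L. Then: (i) ⟨x₁x₂, y⟩ = ⟨x₁,y⟩⟨x₂,y⟩ whenever [x₁,y],[x₂,y] ∈ L; (ii) ⟨y,x⟩ = ⟨x,y⟩^{-1}; (iii) ⟨xl₁, yl₂⟩ = ⟨x,y⟩ for l₁, l₂ ∈ L; (iv) ⟨x^g, y^g⟩ = ⟨x,y⟩ for all g ∈ G. -/

import Mathlib

open MonoidAlgebra Finset
open scoped Classical

noncomputable section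

namespace CF

variable {G : Type} [Group G] [Fintype G]

/-- A group element viewed in the complex group algebra. -/
def ι (g : G) : MonoidAlgebra ℂ G := MonoidAlgebra.single g 1

/-- The central idempotent of `ℂL` attached to an (irreducible) character `φ` of the
subgroup `L`, viewed inside the group algebra `ℂG`. -/
def eIdem (L : Subgroup G) (φ : ↥L → ℂ) : MonoidAlgebra ℂ G :=
  (φ 1 / (Fintype.card L : ℂ)) • ∑ l : L, MonoidAlgebra.single (l : G) (φ l⁻¹)

/-- `a` is supported on the subgroup `L`. -/
def SuppIn (L : Subgroup G) (a : MonoidAlgebra ℂ G) : Prop := ∀ g : G, g ∉ L → a.coeff g = 0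

/-- `a` lies in the corner `e_φ ℂG e_φ` determined by the idempotent `e_φ`. -/
def InCorner (L : Subgroup G) (φ : ↥L → ℂ) (a : MonoidAlgebra ℂ G) : Prop :=
  a * eIdem L φ = a ∧ eIdem L φ * a = a

/-- `c` is a unit of `ℂ L e_φ` (with inverse `c'`) inducing on `ℂ L e_φ` the
conjugation action of the element `x`. -/
def Induces (L : Subgroup G) (φ : ↥L → ℂ) (x : G) (c c' : MonoidAlgebra ℂ G) : Prop :=
  SuppIn L c ∧ SuppIn L c' ∧ InCorner L φ c ∧ InCorner L φ c' ∧
  c * c' = eIdem L φ ∧ c' * c = eIdem L φ ∧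
  ∀ a, SuppIn L a → InCorner L φ a → ι x⁻¹ * a * ι x = c' * a * c

/-- The Isaacs–Dade scalar `⟨x,y⟩_φ = z`, defined by `⟨x,y⟩_φ e_φ = [x,y][c_y,c_x]`. -/
def DadeScalar (L : Subgroup G) (φ : ↥L → ℂ) (x y : G) (z : ℂ) : Prop :=
  ∃ cx cx' cy cy', Induces L φ x cx cx' ∧ Induces L φ y cy cy' ∧
    ι (x⁻¹ * y⁻¹ * x * y) * (cy' * cx' * cy * cx) = z • eIdem L φ

/-- `χ` is the character of an irreducible complex representation of `H`. -/
def IsIrrChar (H : Type) [Group H] (χ : H → ℂ) : Prop :=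
  ∃ V : FDRep ℂ H, CategoryTheory.Simple V ∧ χ = V.character

/-- The usual inner product of complex-valued class functions on a finite group. -/
def innerChar (H : Type) [Group H] [Fintype H] (α β : H → ℂ) : ℂ :=
  (Fintype.card H : ℂ)⁻¹ * ∑ h : H, α h * (starRingEnd ℂ) (β h)

/-- `φ ∈ Irr L` is invariant under conjugation by all elements of `G`. -/
def Invariant (L : Subgroup G) [hN : L.Normal] (φ : ↥L → ℂ) : Prop :=
  ∀ (g : G) (l : ↥L), φ ⟨g⁻¹ * l * g, by simpa [mul_assoc] using hN.conj_mem l l.2 g⁻¹⟩ = φ l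

end CF

/-!
Invariance of `φ` makes `e = e_φ` central in `ℂG`. For `c_x` inducing `x`, the element
`u_x = x c_x⁻¹` is then a unit of the corner ring `e ℂG e` centralising `ℂL e`, and
`[x,y][c_y,c_x]` is conjugate by `yx` to the group commutator `⁅u_x, u_y⁆`. Another
choice of `c_x` multiplies `u_x` by a unit of `ℂL e`, which commutes with every `u_y`; so
`⟨x,y⟩_φ e = ⁅u_x, u_y⁆` whatever the choices. The four rules are commutator identities in the
unit group of `e ℂG e`: `u_{x₁x₂} = u_{x₁} u_{x₂}` with `⁅u_{x₂}, u_y⁆` central,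
`⁅u_y, u_x⁆ = ⁅u_x, u_y⁆⁻¹`, `u_l = 1` for `l ∈ L`, and `u_{x^g} = (u_x)^g`.
-/

open CategoryTheory
open scoped Pointwise commutatorElement

namespace CF

theorem commutatorElement_eq_of_commute {Γ : Type*} [Group Γ] {a a' b b' : Γ}
    (ha : Commute (a⁻¹ * a') b') (hb : Commute a (b⁻¹ * b')) : ⁅a', b'⁆ = ⁅a, b⁆ := by
  rw [← mul_inv_cancel_left a a', commutatorElement_mul_left_eq_conj_mul,
    commutatorElement_eq_one_iff_commute.mpr ha, mul_one, mul_inv_cancel, one_mul,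
    ← mul_inv_cancel_left b b', commutatorElement_mul_right_eq_mul_conj,
    commutatorElement_eq_one_iff_commute.mpr hb, mul_one, mul_inv_cancel_right]

theorem IsIrrChar.apply_one_ne_zero {H : Type} [Group H] {χ : H → ℂ} (h : IsIrrChar H χ) :
    χ 1 ≠ 0 := by
  obtain ⟨V, hV, rfl⟩ := h
  rw [FDRep.char_one, Nat.cast_ne_zero]
  intro h0
  have : Subsingleton V := Module.finrank_zero_iff.mp h0
  exact id_nonzero V (Action.Hom.ext (by ext; exact Subsingleton.elim _ _))

section GroupAlgebra

variable {G : Type} [Group G] {L : Subgroup G}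

theorem ι_mul (g h : G) : ι (g * h) = ι g * ι h := by
  simp [ι, MonoidAlgebra.single_mul_single]

theorem ι_one : ι (1 : G) = 1 := rfl

@[simp]
theorem ι_mul_inv (g : G) : ι g * ι g⁻¹ = 1 := by
  rw [← ι_mul, mul_inv_cancel, ι_one]

@[simp]
theorem ι_inv_mul (g : G) : ι g⁻¹ * ι g = 1 := by
  rw [← ι_mul, inv_mul_cancel, ι_one]

@[simp]
theorem ι_inv_mul_cancel_left (g : G) (a : MonoidAlgebra ℂ G) : ι g⁻¹ * (ι g * a) = a := by
  rw [← mul_assoc, ι_inv_mul, one_mul]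

@[simp]
theorem ι_mul_inv_cancel_left (g : G) (a : MonoidAlgebra ℂ G) : ι g * (ι g⁻¹ * a) = a := by
  rw [← mul_assoc, ι_mul_inv, one_mul]

theorem ι_conj_mul (g : G) (a b : MonoidAlgebra ℂ G) :
    ι g⁻¹ * a * ι g * (ι g⁻¹ * b * ι g) = ι g⁻¹ * (a * b) * ι g := by
  simp only [mul_assoc, ι_mul_inv_cancel_left]

theorem suppIn_iff {a : MonoidAlgebra ℂ G} : SuppIn L a ↔ (a.coeff.support : Set G) ⊆ L := by
  simp only [SuppIn, Set.subset_def, Finset.mem_coe, Finsupp.mem_support_iff]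
  exact forall_congr' fun g => not_imp_comm

theorem SuppIn.mul {a b : MonoidAlgebra ℂ G} (ha : SuppIn L a) (hb : SuppIn L b) :
    SuppIn L (a * b) := by
  rw [suppIn_iff] at *
  calc ((a * b).coeff.support : Set G) ⊆ a.coeff.support * b.coeff.support := by
        exact_mod_cast support_coeff_mul_subset a b
    _ ⊆ L := Set.mul_subset_iff.mpr fun x hx y hy => L.mul_mem (ha hx) (hb hy)

theorem suppIn_ι {l : G} (hl : l ∈ L) : SuppIn L (ι l) := by
  intro g hg
  rw [ι, MonoidAlgebra.coeff_single, Finsupp.single_apply, if_neg]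
  rintro rfl
  exact hg hl

theorem suppIn_eIdem [Fintype G] (φ : ↥L → ℂ) : SuppIn L (eIdem L φ) := by
  intro g hg
  rw [eIdem, MonoidAlgebra.coeff_smul_apply, MonoidAlgebra.coeff_sum, Finset.sum_apply',
    Finset.sum_eq_zero, smul_zero]
  intro l _
  rw [MonoidAlgebra.coeff_single, Finsupp.single_apply, if_neg]
  rintro rfl
  exact hg l.2

theorem SuppIn.conj [L.Normal] {a : MonoidAlgebra ℂ G} (ha : SuppIn L a) (g : G) :
    SuppIn L (ι g⁻¹ * a * ι g) := by
  intro h hh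
  simp only [ι, mul_assoc]
  rw [MonoidAlgebra.coeff_single_mul_apply, inv_inv, MonoidAlgebra.coeff_mul_single_apply, ha,
    zero_mul, mul_zero]
  intro hmem
  exact hh (by simpa [mul_assoc] using ‹L.Normal›.conj_mem _ hmem g⁻¹)

theorem Invariant.apply_conjNormal [L.Normal] {φ : ↥L → ℂ} (hinv : Invariant L φ) (g : G)
    (l : L) : φ (MulAut.conjNormal g l) = φ l := by
  convert hinv g⁻¹ l using 2
  ext
  simp

end GroupAlgebra

section Corner

variable {G : Type} [Group G] [Fintype G] {L : Subgroup G} {φ : ↥L → ℂ}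
  {x y : G} {c c' b b' : MonoidAlgebra ℂ G}

theorem eIdem_coeff_one (L : Subgroup G) (φ : ↥L → ℂ) :
    (eIdem L φ).coeff 1 = φ 1 / Fintype.card L * φ 1 := by
  rw [eIdem, MonoidAlgebra.coeff_smul_apply, MonoidAlgebra.coeff_sum, Finset.sum_apply',
    Finset.sum_eq_single (1 : L)]
  · simp
  · intro l _ hl
    rw [MonoidAlgebra.coeff_single, Finsupp.single_apply, if_neg]
    exact fun h => hl (Subtype.ext h)
  · simp

theorem eIdem_ne_zero (hirr : IsIrrChar L φ) : eIdem L φ ≠ 0 := by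
  intro h0
  have h1 := eIdem_coeff_one L φ
  rw [h0] at h1
  have hφ := hirr.apply_one_ne_zero
  have hcard : (Fintype.card L : ℂ) ≠ 0 := Nat.cast_ne_zero.mpr Fintype.card_ne_zero
  exact mul_ne_zero (div_ne_zero hφ hcard) hφ h1.symm

theorem InCorner.mul {a b : MonoidAlgebra ℂ G} (ha : InCorner L φ a) (hb : InCorner L φ b) :
    InCorner L φ (a * b) :=
  ⟨by rw [mul_assoc, hb.1], by rw [← mul_assoc, ha.2]⟩

theorem inCorner_iff_mem_corner (idem : IsIdempotentElem (eIdem L φ))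
    {a : MonoidAlgebra ℂ G} : InCorner L φ a ↔ a ∈ Subsemigroup.corner (eIdem L φ) := by
  rw [Subsemigroup.mem_corner_iff idem, InCorner, and_comm]

theorem Induces.isIdempotentElem (hx : Induces L φ x c c') : IsIdempotentElem (eIdem L φ) := by
  obtain ⟨-, -, -, hc', hcc', -⟩ := hx
  rw [IsIdempotentElem]
  nth_rw 1 [← hcc']
  rw [mul_assoc, hc'.1, hcc']

theorem Induces.mul_ι (hx : Induces L φ x c c') {a : MonoidAlgebra ℂ G} (ha : SuppIn L a)
    (hca : InCorner L φ a) : a * ι x = ι x * (c' * a * c) := by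
  rw [← hx.2.2.2.2.2.2 a ha hca, ← mul_assoc, ← mul_assoc, ι_mul_inv, one_mul]

theorem Induces.commute_ι_mul (hy : Induces L φ y b b') {a : MonoidAlgebra ℂ G}
    (ha : SuppIn L a) (hca : InCorner L φ a) : Commute (ι y * b') a := by
  calc ι y * b' * a = ι y * (b' * a * b) * b' := by
        simp only [mul_assoc, hy.2.2.2.2.1, hca.1]
    _ = a * (ι y * b') := by rw [← hy.mul_ι ha hca, mul_assoc]

theorem Induces.commute_mul_ι_inv (hx : Induces L φ x c c') {a : MonoidAlgebra ℂ G}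
    (ha : SuppIn L a) (hca : InCorner L φ a) : Commute (c * ι x⁻¹) a := by
  calc c * ι x⁻¹ * a = c * (ι x⁻¹ * a * ι x) * ι x⁻¹ := by
        simp only [mul_assoc, ι_mul_inv, mul_one]
    _ = a * (c * ι x⁻¹) := by
        rw [hx.2.2.2.2.2.2 a ha hca, ← mul_assoc c, ← mul_assoc c, hx.2.2.2.2.1, hca.2,
          mul_assoc]

theorem Induces.mul {x₁ x₂ : G} {c₁ c₁' c₂ c₂' : MonoidAlgebra ℂ G}
    (h₁ : Induces L φ x₁ c₁ c₁') (h₂ : Induces L φ x₂ c₂ c₂') :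
    Induces L φ (x₁ * x₂) (c₁ * c₂) (c₂' * c₁') := by
  obtain ⟨s₁, s₁', k₁, k₁', m₁, m₁', j₁⟩ := h₁
  obtain ⟨s₂, s₂', k₂, k₂', m₂, m₂', j₂⟩ := h₂
  refine ⟨s₁.mul s₂, s₂'.mul s₁', k₁.mul k₂, k₂'.mul k₁', ?_, ?_, fun a ha hca => ?_⟩
  · rw [mul_assoc, ← mul_assoc c₂, m₂, k₁'.2, m₁]
  · rw [mul_assoc, ← mul_assoc c₁', m₁', k₂.2, m₂']
  · calc ι (x₁ * x₂)⁻¹ * a * ι (x₁ * x₂)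
        = ι x₂⁻¹ * (ι x₁⁻¹ * a * ι x₁) * ι x₂ := by
          simp only [mul_inv_rev, ι_mul, mul_assoc]
      _ = c₂' * (c₁' * a * c₁) * c₂ := by
          rw [j₁ a ha hca, j₂ _ ((s₁'.mul ha).mul s₁) ((k₁'.mul hca).mul k₁)]
      _ = c₂' * c₁' * a * (c₁ * c₂) := by simp only [mul_assoc]

theorem commute_of_val_eq_smul_eIdem {idem : IsIdempotentElem (eIdem L φ)} (u : idem.Cornerˣ)
    {s : idem.Cornerˣ} {z : ℂ} (hs : s.val.val = z • eIdem L φ) : Commute u s :=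
  Units.ext <| Subtype.ext <| by
    change u.val.val * s.val.val = s.val.val * u.val.val
    have hu := (Subsemigroup.mem_corner_iff idem).mp u.val.2
    rw [hs, mul_smul_comm, smul_mul_assoc, hu.1, hu.2]

theorem val_mul_eq_smul_eIdem {idem : IsIdempotentElem (eIdem L φ)} {s t : idem.Cornerˣ}
    {z w : ℂ} (hs : s.val.val = z • eIdem L φ) (ht : t.val.val = w • eIdem L φ) :
    (s * t).val.val = (z * w) • eIdem L φ := by
  change s.val.val * t.val.val = _
  rw [hs, ht, smul_mul_smul_comm, idem.eq]

end Corner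

section Invariant

variable {G : Type} [Group G] [Fintype G] {L : Subgroup G} [L.Normal] {φ : ↥L → ℂ}
  {x : G} {c c' : MonoidAlgebra ℂ G}

theorem commute_ι_eIdem (hinv : Invariant L φ) (g : G) : Commute (ι g) (eIdem L φ) := by
  simp only [Commute, SemiconjBy, eIdem, mul_smul_comm, smul_mul_assoc, Finset.mul_sum,
    Finset.sum_mul]
  congr 1
  refine Fintype.sum_equiv (MulAut.conjNormal g).toEquiv _ _ fun l => ?_
  simp [ι, MonoidAlgebra.single_mul_single, ← map_inv, hinv.apply_conjNormal]

theorem commute_eIdem (hinv : Invariant L φ) (a : MonoidAlgebra ℂ G) :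
    Commute a (eIdem L φ) := by
  induction a using MonoidAlgebra.induction_on with
  | of g => exact commute_ι_eIdem hinv g
  | add a b ha hb => exact ha.add_left hb
  | smul r a ha => exact ha.smul_left r

theorem inCorner_iff (hinv : Invariant L φ) {a : MonoidAlgebra ℂ G} :
    InCorner L φ a ↔ a * eIdem L φ = a := by
  rw [InCorner, (commute_eIdem hinv a).eq, and_self]

theorem InCorner.ι_mul (hinv : Invariant L φ) {a : MonoidAlgebra ℂ G} (ha : InCorner L φ a)
    (g : G) : InCorner L φ (ι g * a) := by
  rw [inCorner_iff hinv] at ha ⊢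
  rw [mul_assoc, ha]

theorem InCorner.mul_ι (hinv : Invariant L φ) {a : MonoidAlgebra ℂ G} (ha : InCorner L φ a)
    (g : G) : InCorner L φ (a * ι g) := by
  rw [inCorner_iff hinv] at ha ⊢
  rw [mul_assoc, (commute_ι_eIdem hinv g).eq, ← mul_assoc, ha]

theorem InCorner.conj (hinv : Invariant L φ) {a : MonoidAlgebra ℂ G} (ha : InCorner L φ a)
    (g : G) : InCorner L φ (ι g⁻¹ * a * ι g) :=
  (ha.ι_mul hinv g⁻¹).mul_ι hinv g

theorem ι_conj_eIdem (hinv : Invariant L φ) (g : G) : ι g⁻¹ * eIdem L φ * ι g = eIdem L φ := by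
  rw [mul_assoc, ← (commute_ι_eIdem hinv g).eq, ι_inv_mul_cancel_left]

theorem ι_conj_smul_eIdem (hinv : Invariant L φ) (g : G) (z : ℂ) :
    ι g⁻¹ * (z • eIdem L φ) * ι g = z • eIdem L φ := by
  rw [mul_smul_comm, smul_mul_assoc, ι_conj_eIdem hinv]

theorem ι_conj_eq_smul_eIdem_iff (hinv : Invariant L φ) {g : G} {a : MonoidAlgebra ℂ G}
    {z : ℂ} : ι g * a * ι g⁻¹ = z • eIdem L φ ↔ a = z • eIdem L φ := by
  constructor
  · intro h
    calc a = ι g⁻¹ * (ι g * a * ι g⁻¹) * ι g := by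
          simp only [mul_assoc, ι_inv_mul_cancel_left, ι_inv_mul, mul_one]
      _ = z • eIdem L φ := by rw [h, ι_conj_smul_eIdem hinv]
  · rintro rfl
    simpa using ι_conj_smul_eIdem hinv g⁻¹ z

theorem Induces.of_mem (hinv : Invariant L φ) (idem : IsIdempotentElem (eIdem L φ)) {l : G}
    (hl : l ∈ L) : Induces L φ l (ι l * eIdem L φ) (ι l⁻¹ * eIdem L φ) := by
  have hk {g : G} : InCorner L φ (ι g * eIdem L φ) := by
    rw [inCorner_iff hinv, mul_assoc, idem.eq]
  refine ⟨(suppIn_ι hl).mul (suppIn_eIdem φ), (suppIn_ι (L.inv_mem hl)).mul (suppIn_eIdem φ),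
    hk, hk, ?_, ?_, fun a _ hca => ?_⟩
  · rw [mul_assoc, ← mul_assoc (eIdem L φ), ← (commute_ι_eIdem hinv _).eq, mul_assoc, idem.eq,
      ι_mul_inv_cancel_left]
  · rw [mul_assoc, ← mul_assoc (eIdem L φ), ← (commute_ι_eIdem hinv _).eq, mul_assoc, idem.eq,
      ← mul_assoc, ι_inv_mul, one_mul]
  · rw [mul_assoc (ι l⁻¹) (eIdem L φ), hca.2, ← mul_assoc, (hca.conj hinv l).1]

theorem Induces.conj (hinv : Invariant L φ) (hx : Induces L φ x c c') (g : G) :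
    Induces L φ (g⁻¹ * x * g) (ι g⁻¹ * c * ι g) (ι g⁻¹ * c' * ι g) := by
  obtain ⟨s, s', k, k', m, m', j⟩ := hx
  refine ⟨s.conj g, s'.conj g, k.conj hinv g, k'.conj hinv g, ?_, ?_, fun a ha hca => ?_⟩
  · rw [ι_conj_mul, m, ι_conj_eIdem hinv]
  · rw [ι_conj_mul, m', ι_conj_eIdem hinv]
  · have hs := ha.conj g⁻¹
    have hk := hca.conj hinv g⁻¹
    rw [inv_inv] at hs hk
    calc ι (g⁻¹ * x * g)⁻¹ * a * ι (g⁻¹ * x * g)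
        = ι g⁻¹ * (ι x⁻¹ * (ι g * a * ι g⁻¹) * ι x) * ι g := by
          simp only [mul_inv_rev, inv_inv, ι_mul, mul_assoc]
      _ = ι g⁻¹ * c' * ι g * a * (ι g⁻¹ * c * ι g) := by
          rw [j _ hs hk]
          simp only [mul_assoc]

end Invariant

section CornerUnit

variable {G : Type} [Group G] [Fintype G] {L : Subgroup G} [L.Normal] {φ : ↥L → ℂ}
  (hinv : Invariant L φ) (idem : IsIdempotentElem (eIdem L φ))
  {x y : G} {c c' b b' : MonoidAlgebra ℂ G}

def Induces.cornerUnit (hx : Induces L φ x c c') : idem.Cornerˣ where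
  val := ⟨ι x * c', (inCorner_iff_mem_corner idem).mp (hx.2.2.2.1.ι_mul hinv x)⟩
  inv := ⟨c * ι x⁻¹, (inCorner_iff_mem_corner idem).mp (hx.2.2.1.mul_ι hinv x⁻¹)⟩
  val_inv := Subtype.ext <| by
    change ι x * c' * (c * ι x⁻¹) = eIdem L φ
    rw [mul_assoc, ← mul_assoc c', hx.2.2.2.2.2.1, ← mul_assoc, (commute_ι_eIdem hinv x).eq,
      mul_assoc, ι_mul_inv, mul_one]
  inv_val := Subtype.ext <| by
    change c * ι x⁻¹ * (ι x * c') = eIdem L φ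
    rw [mul_assoc, ι_inv_mul_cancel_left, hx.2.2.2.2.1]

theorem Induces.commute_cornerUnit_inv_mul {d d' : MonoidAlgebra ℂ G} (hx : Induces L φ x c c')
    (hx' : Induces L φ x d d') (hy : Induces L φ y b b') :
    Commute ((hx.cornerUnit hinv idem)⁻¹ * hx'.cornerUnit hinv idem) (hy.cornerUnit hinv idem) :=
  Units.ext <| Subtype.ext <| by
    change c * ι x⁻¹ * (ι x * d') * (ι y * b') = ι y * b' * (c * ι x⁻¹ * (ι x * d'))
    rw [mul_assoc c, ι_inv_mul_cancel_left]
    exact (hy.commute_ι_mul (hx.1.mul hx'.2.1) (hx.2.2.1.mul hx'.2.2.2.1)).eq.symm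

theorem Induces.commutatorElement_cornerUnit_congr {d d' f f' : MonoidAlgebra ℂ G}
    (hx : Induces L φ x c c') (hx' : Induces L φ x d d') (hy : Induces L φ y b b')
    (hy' : Induces L φ y f f') :
    ⁅hx'.cornerUnit hinv idem, hy'.cornerUnit hinv idem⁆ =
      ⁅hx.cornerUnit hinv idem, hy.cornerUnit hinv idem⁆ :=
  commutatorElement_eq_of_commute (hx.commute_cornerUnit_inv_mul hinv idem hx' hy')
    (hy.commute_cornerUnit_inv_mul hinv idem hy' hx).symm

theorem Induces.val_commutatorElement_cornerUnit (hx : Induces L φ x c c')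
    (hy : Induces L φ y b b') :
    ⁅hx.cornerUnit hinv idem, hy.cornerUnit hinv idem⁆.val.val =
      ι (x * y) * (b' * c' * b * c) * ι (y * x)⁻¹ := by
  change ι x * c' * (ι y * b') * (c * ι x⁻¹) * (b * ι y⁻¹) = _
  calc _ = ι x * (c' * ι y) * b' * (c * ι x⁻¹ * b) * ι y⁻¹ := by simp only [mul_assoc]
    _ = ι x * (ι y * (b' * c' * b)) * b' * (b * (c * ι x⁻¹)) * ι y⁻¹ := by
        rw [hy.mul_ι hx.2.1 hx.2.2.2.1, (hx.commute_mul_ι_inv hy.1 hy.2.2.1).eq]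
    _ = ι (x * y) * (b' * c' * (b * b' * b) * c) * ι (y * x)⁻¹ := by
        simp only [ι_mul, mul_inv_rev, mul_assoc]
    _ = ι (x * y) * (b' * c' * b * c) * ι (y * x)⁻¹ := by
        rw [hy.2.2.2.2.1, hy.2.2.1.2, mul_assoc (b' * c')]

theorem Induces.dadeScalar_iff (hx : Induces L φ x c c') (hy : Induces L φ y b b') {z : ℂ} :
    DadeScalar L φ x y z ↔
      ⁅hx.cornerUnit hinv idem, hy.cornerUnit hinv idem⁆.val.val = z • eIdem L φ := by
  have key {d d' f f' : MonoidAlgebra ℂ G} (hd : Induces L φ x d d') (hf : Induces L φ y f f') :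
      ι (x⁻¹ * y⁻¹ * x * y) * (f' * d' * f * d) = z • eIdem L φ ↔
        ⁅hd.cornerUnit hinv idem, hf.cornerUnit hinv idem⁆.val.val = z • eIdem L φ := by
    rw [hd.val_commutatorElement_cornerUnit hinv idem hf,
      ← ι_conj_eq_smul_eIdem_iff hinv (g := y * x), ← mul_assoc, ← ι_mul,
      show y * x * (x⁻¹ * y⁻¹ * x * y) = x * y by group]
  constructor
  · rintro ⟨d, d', f, f', hd, hf, h⟩
    rw [← hx.commutatorElement_cornerUnit_congr hinv idem hd hy hf]
    exact (key hd hf).mp h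
  · exact fun h => ⟨c, c', b, b', hx, hy, (key hx hy).mpr h⟩

theorem Induces.cornerUnit_mul {x₁ x₂ : G} {c₁ c₁' c₂ c₂' : MonoidAlgebra ℂ G}
    (h₁ : Induces L φ x₁ c₁ c₁') (h₂ : Induces L φ x₂ c₂ c₂') :
    (h₁.mul h₂).cornerUnit hinv idem = h₁.cornerUnit hinv idem * h₂.cornerUnit hinv idem :=
  Units.ext <| Subtype.ext <| by
    change ι (x₁ * x₂) * (c₂' * c₁') = ι x₁ * c₁' * (ι x₂ * c₂')
    rw [← mul_assoc (ι x₁ * c₁'), mul_assoc (ι x₁), h₂.mul_ι h₁.2.1 h₁.2.2.2.1]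
    simp only [ι_mul, mul_assoc, h₂.2.2.2.2.1, h₁.2.2.2.1.1]

theorem Induces.cornerUnit_of_mem {l : G} (hl : l ∈ L) :
    (Induces.of_mem hinv idem hl).cornerUnit hinv idem = 1 :=
  Units.ext <| Subtype.ext <| ι_mul_inv_cancel_left l (eIdem L φ)

def cornerConj (g : G) : idem.Corner →* idem.Corner where
  toFun a := ⟨ι g⁻¹ * a.val * ι g, (inCorner_iff_mem_corner idem).mp
    (((inCorner_iff_mem_corner idem).mpr a.2).conj hinv g)⟩
  map_one' := Subtype.ext (ι_conj_eIdem hinv g)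
  map_mul' a b := Subtype.ext (ι_conj_mul g a.val b.val).symm

theorem Induces.cornerUnit_conj (hx : Induces L φ x c c') (g : G) :
    (hx.conj hinv g).cornerUnit hinv idem =
      Units.map (cornerConj hinv idem g) (hx.cornerUnit hinv idem) :=
  Units.ext <| Subtype.ext <| by
    change ι (g⁻¹ * x * g) * (ι g⁻¹ * c' * ι g) = ι g⁻¹ * (ι x * c') * ι g
    simp only [ι_mul, mul_assoc, ι_mul_inv_cancel_left]

end CornerUnit

section Form

variable {G : Type} [Group G] [Fintype G] {L : Subgroup G} [L.Normal] {φ : ↥L → ℂ}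
  {x y : G} {z : ℂ}
theorem DadeScalar.eq_mul (hirr : IsIrrChar L φ) (hinv : Invariant L φ) {x₁ x₂ : G}
    {z₁ z₂ : ℂ} (h : DadeScalar L φ (x₁ * x₂) y z) (h₁ : DadeScalar L φ x₁ y z₁)
    (h₂ : DadeScalar L φ x₂ y z₂) : z = z₁ * z₂ := by
  obtain ⟨c₁, c₁', b, b', hc₁, hb, -⟩ := id h₁
  obtain ⟨c₂, c₂', -, -, hc₂, -, -⟩ := id h₂
  have idem := hc₁.isIdempotentElem
  rw [hc₁.dadeScalar_iff hinv idem hb] at h₁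
  rw [hc₂.dadeScalar_iff hinv idem hb] at h₂
  rw [(hc₁.mul hc₂).dadeScalar_iff hinv idem hb, hc₁.cornerUnit_mul hinv idem hc₂,
    commutatorElement_mul_left_eq_conj_mul,
    (commute_of_val_eq_smul_eIdem _ h₂).mul_inv_cancel,
    val_mul_eq_smul_eIdem h₂ h₁, mul_comm] at h
  exact smul_left_injective ℂ (eIdem_ne_zero hirr) h.symm

theorem DadeScalar.mul_swap_eq_one (hirr : IsIrrChar L φ) (hinv : Invariant L φ) {w : ℂ}
    (h : DadeScalar L φ x y z) (h' : DadeScalar L φ y x w) : z * w = 1 := by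
  obtain ⟨c, c', b, b', hc, hb, -⟩ := id h
  have idem := hc.isIdempotentElem
  rw [hc.dadeScalar_iff hinv idem hb] at h
  rw [hb.dadeScalar_iff hinv idem hc, ← commutatorElement_inv] at h'
  refine smul_left_injective ℂ (eIdem_ne_zero hirr) ?_
  change (z * w) • eIdem L φ = (1 : ℂ) • eIdem L φ
  rw [← val_mul_eq_smul_eIdem h h', mul_inv_cancel, one_smul]
  rfl

theorem DadeScalar.mul_of_mem (hinv : Invariant L φ) (h : DadeScalar L φ x y z) {l₁ l₂ : G}
    (hl₁ : l₁ ∈ L) (hl₂ : l₂ ∈ L) : DadeScalar L φ (x * l₁) (y * l₂) z := by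
  obtain ⟨c, c', b, b', hc, hb, -⟩ := id h
  have idem := hc.isIdempotentElem
  have hi₁ := Induces.of_mem hinv idem hl₁
  have hi₂ := Induces.of_mem hinv idem hl₂
  rw [hc.dadeScalar_iff hinv idem hb] at h
  rw [(hc.mul hi₁).dadeScalar_iff hinv idem (hb.mul hi₂), hc.cornerUnit_mul hinv idem hi₁,
    hb.cornerUnit_mul hinv idem hi₂, Induces.cornerUnit_of_mem hinv idem hl₁,
    Induces.cornerUnit_of_mem hinv idem hl₂, mul_one, mul_one]
  exact h

theorem DadeScalar.conj (hinv : Invariant L φ) (h : DadeScalar L φ x y z) (g : G) :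
    DadeScalar L φ (g⁻¹ * x * g) (g⁻¹ * y * g) z := by
  obtain ⟨c, c', b, b', hc, hb, -⟩ := id h
  have idem := hc.isIdempotentElem
  rw [hc.dadeScalar_iff hinv idem hb] at h
  rw [(hc.conj hinv g).dadeScalar_iff hinv idem (hb.conj hinv g), hc.cornerUnit_conj hinv idem g,
    hb.cornerUnit_conj hinv idem g, ← map_commutatorElement]
  change ι g⁻¹ * ⁅hc.cornerUnit hinv idem, hb.cornerUnit hinv idem⁆.val.val * ι g = _
  rw [h, ι_conj_smul_eIdem hinv]

end Form

end CF

open CF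

/-- Lemma 2.1 of Ladisch: basic properties of the Isaacs–Dade form. -/
theorem stmt1 {G : Type} [Group G] [Fintype G] (L : Subgroup G) [L.Normal]
    (φ : ↥L → ℂ) (hφirr : IsIrrChar ↥L φ) (hφinv : Invariant L φ) :
    -- (i) ⟨x₁x₂, y⟩ = ⟨x₁,y⟩⟨x₂,y⟩
    (∀ x₁ x₂ y : G, x₁⁻¹ * y⁻¹ * x₁ * y ∈ L → x₂⁻¹ * y⁻¹ * x₂ * y ∈ L →
      ∀ z₁ z₂ z : ℂ, DadeScalar L φ x₁ y z₁ → DadeScalar L φ x₂ y z₂ →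
        DadeScalar L φ (x₁ * x₂) y z → z = z₁ * z₂) ∧
    -- (ii) ⟨y,x⟩ = ⟨x,y⟩⁻¹
    (∀ x y : G, x⁻¹ * y⁻¹ * x * y ∈ L →
      ∀ z w : ℂ, DadeScalar L φ x y z → DadeScalar L φ y x w → z * w = 1) ∧
    -- (iii) ⟨x l₁, y l₂⟩ = ⟨x,y⟩
    (∀ (x y : G) (l₁ l₂ : ↥L), x⁻¹ * y⁻¹ * x * y ∈ L →
      ∀ z : ℂ, DadeScalar L φ x y z → DadeScalar L φ (x * l₁) (y * l₂) z) ∧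
    -- (iv) ⟨x^g, y^g⟩ = ⟨x,y⟩
    (∀ x y g : G, x⁻¹ * y⁻¹ * x * y ∈ L →
      ∀ z : ℂ, DadeScalar L φ x y z →
        DadeScalar L φ (g⁻¹ * x * g) (g⁻¹ * y * g) z) :=
  ⟨fun _ _ _ _ _ _ _ _ h₁ h₂ h => h.eq_mul hφirr hφinv h₁ h₂,
    fun _ _ _ _ _ h h' => h.mul_swap_eq_one hφirr hφinv h',
    fun _ _ l₁ l₂ _ _ h => h.mul_of_mem hφinv l₁.2 l₂.2,
    fun _ _ g _ _ h => h.conj hφinv g⟩
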